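/- Let S be a primitive Hausdorff pseudocompact topological inverse semigroup such that every maximal subgroup of S is a normal subspace of S. Then S is countably compact. -/

import Mathlib

open Topology

/-- A (Hausdorff) topological space is *pseudocompact* if every locally finite
family of non-empty open subsets is finite. -/
def IsPseudocompact (X : Type*) [TopologicalSpace X] : Prop :=
  ∀ 𝒰 : Set (Set X), (∀ U ∈ 𝒰, IsOpen U ∧ U.Nonempty) →
    LocallyFinite (fun U : 𝒰 => (U : Set X)) → 𝒰.Finite

/-- `inv` witnesses that the semigroup `S` is an *inverse semigroup*:
for every `x`, `inv x` is the unique `y` with `x*y*x = x` and `y*x*y = y`. -/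
structure IsInverseSemigroup (S : Type*) [Mul S] (inv : S → S) : Prop where
  mul_inv_mul : ∀ x : S, x * inv x * x = x
  inv_mul_inv : ∀ x : S, inv x * x * inv x = inv x
  inv_unique : ∀ x y : S, x * y * x = x → y * x * y = y → y = inv x

/-- A semigroup with zero is *primitive* when every non-zero idempotent is
minimal among non-zero idempotents for the natural partial order
`f ≤ e ↔ f*e = e*f = f`. -/
def IsPrimitiveInverse (S : Type*) [Mul S] [Zero S] : Prop :=
  ∀ e f : S, IsIdempotentElem e → e ≠ 0 → IsIdempotentElem f → f ≠ 0 →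
    f * e = f → e * f = f → f = e

/-- A subset `H` of a semigroup is a *subgroup* if it is closed under
multiplication and is a group under the induced operation. -/
def IsSubgroupSet (S : Type*) [Mul S] (H : Set S) : Prop :=
  H.Nonempty ∧ (∀ a ∈ H, ∀ b ∈ H, a * b ∈ H) ∧
    ∃ e ∈ H, (∀ a ∈ H, e * a = a ∧ a * e = a) ∧ ∀ a ∈ H, ∃ b ∈ H, a * b = e ∧ b * a = e

/-- A *maximal subgroup* of a semigroup: a subgroup not properly contained in
any other subgroup. -/
def IsMaximalSubgroup (S : Type*) [Mul S] (H : Set S) : Prop :=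
  IsSubgroupSet S H ∧ ∀ K : Set S, IsSubgroupSet S K → H ⊆ K → K = H

/-- A topological space is *countably compact* if every countable open cover
has a finite subcover. -/
def IsCountablyCompactSpace (X : Type*) [TopologicalSpace X] : Prop :=
  ∀ 𝒰 : Set (Set X), 𝒰.Countable → (∀ U ∈ 𝒰, IsOpen U) → ⋃₀ 𝒰 = Set.univ →
    ∃ 𝒱 ⊆ 𝒰, 𝒱.Finite ∧ ⋃₀ 𝒱 = Set.univ

/-!
Primitivity makes each set `{y | y y⁻¹ = e}`, `e` a non-zero idempotent, open. Nonempty open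
sets lying in distinct such sets and avoiding a fixed neighbourhood of `0` therefore form a
discrete family, so pseudocompactness allows only finitely many of them; in particular only
finitely many idempotents lie outside any neighbourhood of `0`.

Let `A` be an infinite closed discrete set. If infinitely many points of `A` lie in one
`𝓗`-class, that class is clopen and homeomorphic to a maximal subgroup, hence normal, and the
Tietze extension theorem gives a continuous function on a clopen subset of `S` taking every
natural value, which pseudocompactness forbids. Otherwise, after shrinking `A` and possibly
inverting it, `a ↦ a a⁻¹` is injective on `A` while `a⁻¹ a` converges to some `f` (it is
either constant or runs through distinct idempotents, which tend to `0`). With neighbourhoods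
`O ∋ 0` and `N ∋ f` such that `O N` misses `A`, the sets `{y | y y⁻¹ = a a⁻¹, y⁻¹ a ∈ N}`
are then infinitely many disjoint open sets avoiding `O`.
-/

open Filter Function Set

/-- Green's `𝓗`-class of `a`: in an inverse semigroup `y 𝓡 a ↔ y y⁻¹ = a a⁻¹` and
`y 𝓛 a ↔ y⁻¹ y = a⁻¹ a`. -/
def hClass {S : Type*} [Mul S] (inv : S → S) (a : S) : Set S :=
  {y | y * inv y = a * inv a ∧ inv y * y = inv a * a}

theorem mem_hClass_self {S : Type*} [Mul S] (inv : S → S) (a : S) : a ∈ hClass inv a :=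
  ⟨rfl, rfl⟩

theorem hClass_congr {S : Type*} [Mul S] {inv : S → S} {a b : S} (h₁ : a * inv a = b * inv b)
    (h₂ : inv a * a = inv b * b) : hClass inv a = hClass inv b := by
  rw [hClass, hClass, h₁, h₂]

namespace IsInverseSemigroup

section Semigroup

variable {S : Type*} [Semigroup S] {inv : S → S} (hinv : IsInverseSemigroup S inv)
include hinv

theorem inv_inv (x : S) : inv (inv x) = x :=
  (hinv.inv_unique (inv x) x (hinv.inv_mul_inv x) (hinv.mul_inv_mul x)).symm

theorem inv_injective : Injective inv :=
  Involutive.injective hinv.inv_inv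

theorem inv_eq_self {e : S} (he : IsIdempotentElem e) : inv e = e :=
  (hinv.inv_unique e e (by rw [he.eq, he.eq]) (by rw [he.eq, he.eq])).symm

theorem mul_inv_eq_self {e : S} (he : IsIdempotentElem e) : e * inv e = e := by
  rw [hinv.inv_eq_self he, he.eq]

theorem isIdempotentElem_mul_inv (x : S) : IsIdempotentElem (x * inv x) := by
  rw [IsIdempotentElem, ← mul_assoc, hinv.mul_inv_mul]

theorem isIdempotentElem_inv_mul (x : S) : IsIdempotentElem (inv x * x) := by
  rw [IsIdempotentElem, ← mul_assoc, hinv.inv_mul_inv]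

theorem isIdempotentElem_mul {e f : S} (he : IsIdempotentElem e) (hf : IsIdempotentElem f) :
    IsIdempotentElem (e * f) := by
  set x := inv (e * f)
  -- `f * x * e` is also an inverse of `e * f`, hence equals `x`; this makes `x` idempotent.
  have hx : f * x * e = x := by
    refine hinv.inv_unique (e * f) _ ?_ ?_
    · calc e * f * (f * x * e) * (e * f) = (e * f) * x * (e * f) := by
            simp only [mul_assoc, ← mul_assoc e e, ← mul_assoc f f, he.eq, hf.eq]
        _ = e * f := hinv.mul_inv_mul _
    · calc f * x * e * (e * f) * (f * x * e) = f * (x * (e * f) * x) * e := by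
            simp only [mul_assoc, ← mul_assoc e e, ← mul_assoc f f, he.eq, hf.eq]
        _ = f * x * e := by rw [hinv.inv_mul_inv, mul_assoc]
  have hxx : IsIdempotentElem x := by
    calc x * x = f * (x * (e * f) * x) * e := by
          conv_lhs => rw [← hx]
          simp only [mul_assoc]
      _ = x := by rw [hinv.inv_mul_inv]; exact hx
  rw [← hinv.inv_inv (e * f), hinv.inv_eq_self hxx]
  exact hxx

theorem commute_of_isIdempotentElem {e f : S} (he : IsIdempotentElem e)
    (hf : IsIdempotentElem f) : Commute e f := by
  have hef := hinv.isIdempotentElem_mul he hf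
  have hfe := hinv.isIdempotentElem_mul hf he
  have h := hinv.inv_unique (e * f) (f * e)
    (calc e * f * (f * e) * (e * f) = e * (f * f) * (e * e) * f := by simp only [mul_assoc]
      _ = e * f := by rw [hf.eq, he.eq, mul_assoc (e * f), hef.eq])
    (calc f * e * (e * f) * (f * e) = f * (e * e) * (f * f) * e := by simp only [mul_assoc]
      _ = f * e := by rw [hf.eq, he.eq, mul_assoc (f * e), hfe.eq])
  exact (hinv.inv_eq_self hef).symm.trans h.symm

theorem inv_mul_rev (x y : S) : inv (x * y) = inv y * inv x := by
  have hc := hinv.commute_of_isIdempotentElem (hinv.isIdempotentElem_mul_inv y)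
    (hinv.isIdempotentElem_inv_mul x)
  refine (hinv.inv_unique (x * y) (inv y * inv x) ?_ ?_).symm
  · calc x * y * (inv y * inv x) * (x * y) = x * ((y * inv y) * (inv x * x)) * y := by
          simp only [mul_assoc]
      _ = (x * (inv x * x)) * ((y * inv y) * y) := by rw [hc.eq]; simp only [mul_assoc]
      _ = x * y := by rw [← mul_assoc x, hinv.mul_inv_mul, hinv.mul_inv_mul]
  · calc inv y * inv x * (x * y) * (inv y * inv x)
          = inv y * ((inv x * x) * (y * inv y)) * inv x := by simp only [mul_assoc]
      _ = (inv y * (y * inv y)) * ((inv x * x) * inv x) := by rw [← hc.eq]; simp only [mul_assoc]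
      _ = inv y * inv x := by rw [← mul_assoc (inv y), hinv.inv_mul_inv, hinv.inv_mul_inv]


theorem mem_hClass_of_isIdempotentElem {e : S} (he : IsIdempotentElem e) {y : S} :
    y ∈ hClass inv e ↔ y * inv y = e ∧ inv y * y = e := by
  rw [hClass, mem_ofPred_eq, hinv.mul_inv_eq_self he, hinv.inv_eq_self he, he.eq]

theorem isMaximalSubgroup_hClass {e : S} (he : IsIdempotentElem e) :
    IsMaximalSubgroup S (hClass inv e) := by
  have hmem : ∀ y, y ∈ hClass inv e ↔ _ := fun y => hinv.mem_hClass_of_isIdempotentElem he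
  have he_mem : e ∈ hClass inv e := (hmem e).mpr
    ⟨hinv.mul_inv_eq_self he, by rw [hinv.inv_eq_self he, he.eq]⟩
  refine ⟨⟨⟨e, he_mem⟩, fun a ha b hb => ?_, e, he_mem, fun y hy => ?_, fun y hy => ?_⟩,
    ?_⟩
  · rw [hmem] at ha hb ⊢
    constructor
    · calc a * b * inv (a * b) = a * (b * inv b) * inv a := by
            rw [hinv.inv_mul_rev]; simp only [mul_assoc]
        _ = a * (inv a * a) * inv a := by rw [hb.1, ha.2]
        _ = e := by rw [← mul_assoc a, hinv.mul_inv_mul, ha.1]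
    · calc inv (a * b) * (a * b) = inv b * (inv a * a) * b := by
            rw [hinv.inv_mul_rev]; simp only [mul_assoc]
        _ = inv b * (b * inv b) * b := by rw [ha.2, hb.1]
        _ = e := by rw [← mul_assoc (inv b), hinv.inv_mul_inv, hb.2]
  · rw [hmem] at hy
    exact ⟨by rw [← hy.1, hinv.mul_inv_mul],
      by rw [← hy.2, ← mul_assoc, hinv.mul_inv_mul]⟩
  · rw [hmem] at hy
    exact ⟨inv y, (hmem _).mpr (by rw [hinv.inv_inv]; exact hy.symm), hy⟩
  · rintro K ⟨-, -, u, -, hid, hinvK⟩ hHK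
    refine Subset.antisymm (fun a haK => ?_) hHK
    -- the identity of `K` is an idempotent of `K`, hence `e`
    have hu : u = e := by
      obtain ⟨b, -, heb, -⟩ := hinvK e (hHK he_mem)
      calc u = e * (e * b) := by rw [← mul_assoc, he.eq, heb]
        _ = e := by rw [heb, (hid e (hHK he_mem)).2]
    obtain ⟨b, hbK, hab, hba⟩ := hinvK a haK
    obtain rfl : b = inv a := hinv.inv_unique a b (by rw [hab, (hid a haK).1])
      (by rw [hba, (hid b hbK).1])
    exact (hmem a).mpr ⟨hab.trans hu, hba.trans hu⟩

theorem inv_mul_mem_hClass {a y : S} (hy : y ∈ hClass inv a) :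
    inv a * y ∈ hClass inv (inv a * a) := by
  rw [hinv.mem_hClass_of_isIdempotentElem (hinv.isIdempotentElem_inv_mul a)]
  constructor
  · calc inv a * y * inv (inv a * y) = inv a * (y * inv y) * a := by
          rw [hinv.inv_mul_rev, hinv.inv_inv]; simp only [mul_assoc]
      _ = inv a * a := by rw [hy.1, ← mul_assoc (inv a), hinv.inv_mul_inv]
  · calc inv (inv a * y) * (inv a * y) = inv y * (a * inv a) * y := by
          rw [hinv.inv_mul_rev, hinv.inv_inv]; simp only [mul_assoc]
      _ = inv a * a := by rw [← hy.1, ← mul_assoc (inv y), hinv.inv_mul_inv, hy.2]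

theorem mul_mem_hClass {a z : S} (hz : z ∈ hClass inv (inv a * a)) : a * z ∈ hClass inv a := by
  rw [hinv.mem_hClass_of_isIdempotentElem (hinv.isIdempotentElem_inv_mul a)] at hz
  constructor
  · calc a * z * inv (a * z) = a * (z * inv z) * inv a := by
          rw [hinv.inv_mul_rev]; simp only [mul_assoc]
      _ = a * inv a := by rw [hz.1, ← mul_assoc a (inv a), hinv.mul_inv_mul]
  · calc inv (a * z) * (a * z) = inv z * (inv a * a) * z := by
          rw [hinv.inv_mul_rev]; simp only [mul_assoc]
      _ = inv z * (z * inv z) * z := by rw [hz.1]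
      _ = inv a * a := by rw [← mul_assoc (inv z), hinv.inv_mul_inv, hz.2]

def hClassHomeomorph [TopologicalSpace S] [ContinuousMul S] (a : S) :
    hClass inv a ≃ₜ hClass inv (inv a * a) where
  toFun y := ⟨inv a * y, hinv.inv_mul_mem_hClass y.2⟩
  invFun z := ⟨a * z, hinv.mul_mem_hClass z.2⟩
  left_inv y := Subtype.ext <| by
    change a * (inv a * y) = y
    rw [← mul_assoc, ← y.2.1, hinv.mul_inv_mul]
  right_inv z := Subtype.ext <| by
    have hz := (hinv.mem_hClass_of_isIdempotentElem (hinv.isIdempotentElem_inv_mul a)).mp z.2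
    calc inv a * (a * z) = (z * inv z) * z := by rw [← mul_assoc, hz.1]
      _ = z := hinv.mul_inv_mul z
  continuous_toFun := by fun_prop
  continuous_invFun := by fun_prop

end Semigroup

variable {S : Type*} [SemigroupWithZero S] {inv : S → S} (hinv : IsInverseSemigroup S inv)
include hinv

theorem inv_zero : inv (0 : S) = 0 :=
  hinv.inv_eq_self .zero

theorem eq_zero_of_mul_inv_eq_zero {x : S} (h : x * inv x = 0) : x = 0 := by
  rw [← hinv.mul_inv_mul x, h, zero_mul]

theorem eq_zero_of_inv_mul_eq_zero {x : S} (h : inv x * x = 0) : x = 0 := by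
  rw [← hinv.mul_inv_mul x, mul_assoc, h, mul_zero]

end IsInverseSemigroup

theorem IsPrimitiveInverse.eq_of_mul_ne_zero {S : Type*} [SemigroupWithZero S] {inv : S → S}
    (hprim : IsPrimitiveInverse S) (hinv : IsInverseSemigroup S inv) {e f : S}
    (he : IsIdempotentElem e) (hf : IsIdempotentElem f) (hef : e * f ≠ 0) : e = f := by
  have hc := hinv.commute_of_isIdempotentElem he hf
  have hidem := hinv.isIdempotentElem_mul he hf
  have h₁ : e * f = e := hprim e (e * f) he (left_ne_zero_of_mul hef) hidem hef
    (by rw [mul_assoc, ← hc.eq, ← mul_assoc, he.eq]) (by rw [← mul_assoc, he.eq])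
  have h₂ : e * f = f := hprim f (e * f) hf (right_ne_zero_of_mul hef) hidem hef
    (by rw [mul_assoc, hf.eq]) (by rw [← mul_assoc, ← hc.eq, mul_assoc, hf.eq])
  rw [← h₁, h₂]

section LocallyFiniteSet

variable {X Y : Type*} [TopologicalSpace X] [TopologicalSpace Y]

/-- In a T₁ space these are exactly the closed discrete sets. -/
def LocallyFiniteSet (A : Set X) : Prop :=
  ∀ p, ∃ t ∈ 𝓝 p, (A ∩ t).Finite

theorem LocallyFiniteSet.mono {A B : Set X} (hA : LocallyFiniteSet A) (hBA : B ⊆ A) :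
    LocallyFiniteSet B := fun p =>
  let ⟨t, ht, hfin⟩ := hA p
  ⟨t, ht, hfin.subset (inter_subset_inter_left t hBA)⟩

theorem LocallyFiniteSet.preimage {f : Y → X} (hf : Continuous f) (hinj : Injective f)
    {A : Set X} (hA : LocallyFiniteSet A) : LocallyFiniteSet (f ⁻¹' A) := fun p =>
  let ⟨t, ht, hfin⟩ := hA (f p)
  ⟨f ⁻¹' t, hf.continuousAt ht, (hfin.preimage hinj.injOn :)⟩

theorem LocallyFiniteSet.isClosed [T1Space X] {A : Set X} (hA : LocallyFiniteSet A) :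
    IsClosed A := by
  refine isOpen_compl_iff.mp (isOpen_iff_mem_nhds.mpr fun p hp => ?_)
  obtain ⟨t, ht, hfin⟩ := hA p
  filter_upwards [ht, hfin.isClosed.isOpen_compl.mem_nhds fun h => hp h.1] with q hqt hq hqA
  exact hq ⟨hqA, hqt⟩

theorem LocallyFiniteSet.discreteTopology [T1Space X] {A : Set X} (hA : LocallyFiniteSet A) :
    DiscreteTopology A := by
  refine discreteTopology_iff_forall_isClosed.mpr fun B => ?_
  rw [← preimage_image_eq B Subtype.val_injective]
  exact (hA.mono (Subtype.coe_image_subset A B)).isClosed.preimage continuous_subtype_val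

theorem isCountablyCompactSpace_of_forall_locallyFiniteSet
    (h : ∀ A : Set X, LocallyFiniteSet A → A.Finite) : IsCountablyCompactSpace X := by
  intro 𝒰 hcount hopen hcover
  by_contra! hno
  have h𝒰 : 𝒰.Nonempty := nonempty_iff_ne_empty.mpr fun h =>
    hno ∅ (empty_subset _) finite_empty (by rwa [h] at hcover)
  obtain ⟨u, rfl⟩ := hcount.exists_eq_range h𝒰
  have hy : ∀ n, ∃ y, ∀ k ≤ n, y ∉ u k := by
    intro n
    by_contra! hall
    refine hno (u '' Iic n) (image_subset_range u _) ((finite_Iic n).image u) ?_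
    exact eq_univ_of_forall fun q =>
      let ⟨k, hk, hqk⟩ := hall q
      ⟨u k, mem_image_of_mem u hk, hqk⟩
  choose y hy using hy
  have hκ : ∀ p, ∃ k, p ∈ u k := fun p => by
    simpa using (hcover.symm ▸ mem_univ p : p ∈ ⋃₀ range u)
  choose κ hκ using hκ
  have hlt : ∀ {n k}, y n ∈ u k → n < k := fun {n k} h => not_le.mp fun hkn => hy n k hkn h
  have hfin := h (range y) fun p =>
    ⟨u (κ p), (hopen _ (mem_range_self _)).mem_nhds (hκ p),
      ((finite_Iio (κ p)).image y).subset fun _ ⟨⟨n, hn⟩, hnp⟩ =>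
        ⟨n, hlt (hn ▸ hnp), hn⟩⟩
  obtain ⟨K, hK⟩ := (hfin.image κ).bddAbove
  exact hy K (κ (y K)) (hK (mem_image_of_mem κ (mem_range_self K))) (hκ (y K))

end LocallyFiniteSet

theorem Set.Infinite.exists_infinite_fiber_or_injOn {α β : Type*} {s : Set α} (hs : s.Infinite)
    (g : α → β) :
    (∃ a ∈ s, (s ∩ g ⁻¹' {g a}).Infinite) ∨ ∃ t ⊆ s, t.Infinite ∧ InjOn g t := by
  by_cases himg : (g '' s).Finite
  · left
    by_contra! h
    refine hs ((himg.biUnion fun _ ⟨a, ha, hb⟩ => hb ▸ h a ha).subset fun a ha => ?_)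
    exact mem_biUnion (mem_image_of_mem g ha) ⟨ha, rfl⟩
  · right
    obtain ⟨t, hts, hinj, himg'⟩ := (surjOn_image g s).exists_subset_injOn_image_eq
    exact ⟨t, hts, fun ht => himg (himg' ▸ ht.image g), hinj⟩

section Pseudocompact

variable {X : Type*} [TopologicalSpace X]

theorem IsPseudocompact.finite_of_locallyFinite (hpc : IsPseudocompact X) {ι : Type*}
    {F : ι → Set X} (hopen : ∀ i, IsOpen (F i)) (hne : ∀ i, (F i).Nonempty)
    (hdisj : Pairwise (Disjoint on F)) (hlf : LocallyFinite F) : Finite ι := by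
  have hinj : Injective F := fun i j hij => by_contra fun h =>
    (hne i).ne_empty ((hdisj h).eq_bot_of_le (hij ▸ le_rfl))
  exact (finite_range_iff hinj).mp <|
    hpc _ (forall_mem_range.mpr fun i => ⟨hopen i, hne i⟩) hlf.on_range

theorem IsPseudocompact.finite_setOf_natCast_mem_range (hpc : IsPseudocompact X) {U : Set X}
    (hU : IsClopen U) (g : C(U, ℝ)) : {k : ℕ | (k : ℝ) ∈ range g}.Finite := by
  set K := {k : ℕ | (k : ℝ) ∈ range g}
  have hopen : ∀ c r, IsOpen ((↑) '' (g ⁻¹' Metric.ball c r) : Set X) := fun c r =>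
    hU.isOpen.isOpenMap_subtype_val _ (Metric.isOpen_ball.preimage g.continuous)
  refine finite_coe_iff.mp (hpc.finite_of_locallyFinite
    (F := fun k : K => (↑) '' (g ⁻¹' Metric.ball (k : ℝ) (1 / 2))) (fun k => hopen _ _)
    ?_ ?_ ?_)
  · rintro ⟨k, u, hu⟩
    exact ⟨u, u, by simp [hu], rfl⟩
  · intro k m hkm
    refine (disjoint_image_iff Subtype.val_injective).mpr (Disjoint.preimage g ?_)
    refine Metric.ball_disjoint_ball ?_
    rw [Nat.dist_cast_real]
    linarith [Nat.pairwise_one_le_dist (Subtype.coe_ne_coe.mpr hkm)]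
  · intro p
    by_cases hp : p ∈ U
    · refine ⟨(↑) '' (g ⁻¹' Metric.ball (g ⟨p, hp⟩) (1 / 2)), (hopen _ _).mem_nhds
        ⟨⟨p, hp⟩, Metric.mem_ball_self (by norm_num), rfl⟩, ?_⟩
      refine ((finite_Iio ⌈g ⟨p, hp⟩ + 1⌉₊).preimage
        Subtype.val_injective.injOn).subset ?_
      rintro k ⟨_, ⟨u, hu, rfl⟩, v, hv, huv⟩
      cases Subtype.val_injective huv
      rw [mem_preimage, Metric.mem_ball, dist_comm] at hu
      rw [mem_preimage, Metric.mem_ball] at hv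
      have := dist_triangle ((k : ℕ) : ℝ) (g u) (g ⟨p, hp⟩)
      rw [Real.dist_eq] at this
      exact Nat.lt_ceil.mpr (by linarith [le_abs_self (((k : ℕ) : ℝ) - g ⟨p, hp⟩)])
    · refine ⟨Uᶜ, hU.isClosed.isOpen_compl.mem_nhds hp, ?_⟩
      convert finite_empty
      refine eq_empty_of_forall_notMem fun k ⟨_, ⟨u, _, rfl⟩, hu⟩ => hu u.2

end Pseudocompact

theorem exists_continuousMap_natCast_mem_range {X : Type*} [TopologicalSpace X] [NormalSpace X]
    {A : Set X} (hA : IsClosed A) [DiscreteTopology A] (hinf : A.Infinite) :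
    ∃ g : C(X, ℝ), ∀ k : ℕ, (k : ℝ) ∈ range g := by
  set e := hinf.natEmbedding
  obtain ⟨g, hg⟩ := ContinuousMap.exists_restrict_eq hA
    ⟨fun a => ((invFun e a : ℕ) : ℝ), continuous_of_discreteTopology⟩
  refine ⟨g, fun k => ⟨e k, ?_⟩⟩
  simpa [leftInverse_invFun e.injective k] using congr($hg (e k))

section TopologicalInverseSemigroup

variable {S : Type*} [SemigroupWithZero S] [TopologicalSpace S] [T1Space S] [ContinuousMul S]
  {inv : S → S}
  (hinv : IsInverseSemigroup S inv) (hinvc : Continuous inv) (hprim : IsPrimitiveInverse S)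
include hinv hinvc hprim

theorem isOpen_setOf_mul_inv_eq {e : S} (he : IsIdempotentElem e) (he0 : e ≠ 0) :
    IsOpen {y | y * inv y = e} := by
  -- by primitivity, `y y⁻¹ = e ↔ e (y y⁻¹) ≠ 0`
  have : {y | y * inv y = e} = (fun y => e * (y * inv y)) ⁻¹' {0}ᶜ := by
    ext y
    refine ⟨fun (hy : y * inv y = e) => ?_, fun hy =>
      (hprim.eq_of_mul_ne_zero hinv he (hinv.isIdempotentElem_mul_inv y) hy).symm⟩
    rwa [mem_preimage, hy, he.eq]
  rw [this]
  exact isOpen_compl_singleton.preimage (by fun_prop)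

theorem isOpen_setOf_inv_mul_eq {e : S} (he : IsIdempotentElem e) (he0 : e ≠ 0) :
    IsOpen {y | inv y * y = e} := by
  have : {y | inv y * y = e} = inv ⁻¹' {y | y * inv y = e} := by
    ext y
    simp [hinv.inv_inv]
  rw [this]
  exact (isOpen_setOf_mul_inv_eq hinv hinvc hprim he he0).preimage hinvc

theorem isClopen_hClass {a : S} (ha : a ≠ 0) : IsClopen (hClass inv a) := by
  refine ⟨(isClosed_singleton.preimage (by fun_prop : Continuous fun y => y * inv y)).inter
    (isClosed_singleton.preimage (by fun_prop : Continuous fun y => inv y * y)), ?_⟩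
  exact (isOpen_setOf_mul_inv_eq hinv hinvc hprim (hinv.isIdempotentElem_mul_inv a)
    fun h => ha (hinv.eq_zero_of_mul_inv_eq_zero h)).inter
    (isOpen_setOf_inv_mul_eq hinv hinvc hprim (hinv.isIdempotentElem_inv_mul a)
    fun h => ha (hinv.eq_zero_of_inv_mul_eq_zero h))

/-- Primitivity makes such a family locally finite away from `0`. -/
theorem IsPseudocompact.finite_of_forall_mul_inv_eq (hpc : IsPseudocompact S) {ι : Type*}
    {F : ι → Set S} {e : ι → S} (he : Injective e) (hopen : ∀ i, IsOpen (F i))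
    (hne : ∀ i, (F i).Nonempty) (hFe : ∀ i, ∀ y ∈ F i, y * inv y = e i) {t : Set S}
    (ht : t ∈ 𝓝 0) (hFt : ∀ i, Disjoint (F i) t) : Finite ι := by
  refine hpc.finite_of_locallyFinite hopen hne (fun i j hij => disjoint_left.mpr fun y hi hj =>
    hij (he ((hFe i y hi).symm.trans (hFe j y hj)))) fun p => ?_
  by_cases hp : p = 0
  · subst hp
    exact ⟨t, ht, by simp [(hFt _).inter_eq]⟩
  · have hp0 : p * inv p ≠ 0 := fun h => hp (hinv.eq_zero_of_mul_inv_eq_zero h)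
    refine ⟨_, (isOpen_setOf_mul_inv_eq hinv hinvc hprim (hinv.isIdempotentElem_mul_inv p)
      hp0).mem_nhds rfl, Subsingleton.finite fun i ⟨y, hyi, hy⟩ j ⟨z, hzj, hz⟩ => he ?_⟩
    rw [← hFe i y hyi, ← hFe j z hzj, mem_ofPred_eq.mp hy, mem_ofPred_eq.mp hz]

theorem IsPseudocompact.finite_setOf_isIdempotentElem_notMem (hpc : IsPseudocompact S)
    {U : Set S} (hU : U ∈ 𝓝 0) : {e : S | IsIdempotentElem e ∧ e ∉ U}.Finite := by
  set D := {e : S | IsIdempotentElem e ∧ e ∉ U}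
  have hψ : Continuous fun y => y * inv y := by fun_prop
  refine finite_coe_iff.mp (hpc.finite_of_forall_mul_inv_eq hinv hinvc hprim
    (F := fun e : D => {y | y * inv y = e}) Subtype.val_injective
    (fun e => isOpen_setOf_mul_inv_eq hinv hinvc hprim e.2.1
      fun h => e.2.2 (h ▸ mem_of_mem_nhds hU))
    (fun e => ⟨e, hinv.mul_inv_eq_self e.2.1⟩) (fun _ _ h => h)
    (hψ.continuousAt.preimage_mem_nhds (by rwa [zero_mul])) fun e => ?_)
  exact disjoint_left.mpr fun y (hy : y * inv y = e) hyU => e.2.2 (hy ▸ hyU)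

/-- The sets `{y | y y⁻¹ = a a⁻¹, y⁻¹ a ∈ N}` are disjoint open neighbourhoods of the
`a ∈ A`; they avoid a neighbourhood `O` of `0` once `O N` misses `A`. -/
theorem IsPseudocompact.finite_of_injOn_mul_inv_of_forall_nhds (hpc : IsPseudocompact S)
    {A : Set S} (hA : LocallyFiniteSet A) (h0 : (0 : S) ∉ A)
    (hinj : InjOn (fun y => y * inv y) A) {f : S}
    (hf : ∀ N ∈ 𝓝 f, {a ∈ A | inv a * a ∉ N}.Finite) : A.Finite := by
  obtain ⟨W, hW, hAW⟩ := hA 0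
  obtain ⟨O, N, hO, h0O, hN, hfN, hON⟩ := mem_nhds_prod_iff'.mp
    (continuous_mul.continuousAt (x := ((0 : S), f)) (by rwa [zero_mul] : W ∈ 𝓝 ((0 : S) * f)))
  set A' := {a ∈ A | a ∉ W ∧ inv a * a ∈ N}
  have hA' : A ⊆ A' ∪ (A ∩ W) ∪ {a ∈ A | inv a * a ∉ N} := fun a ha => by
    by_cases haW : a ∈ W <;> by_cases haN : inv a * a ∈ N <;> simp [A', ha, haW, haN]
  refine ((Finite.union ?_ hAW).union (hf N (hN.mem_nhds hfN))).subset hA'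
  refine finite_coe_iff.mp (hpc.finite_of_forall_mul_inv_eq hinv hinvc hprim
    (F := fun a : A' => {y | y * inv y = a * inv a ∧ inv y * a ∈ N}) (e := fun a => a * inv a)
    (fun a b h => Subtype.ext (hinj a.2.1 b.2.1 h)) (fun a => ?_) (fun a => ⟨a, rfl, a.2.2.2⟩)
    (fun a y hy => hy.1) (hO.mem_nhds h0O) fun a => ?_)
  · exact (isOpen_setOf_mul_inv_eq hinv hinvc hprim (hinv.isIdempotentElem_mul_inv a)
      fun h => h0 (hinv.eq_zero_of_mul_inv_eq_zero h ▸ a.2.1)).inter (hN.preimage (by fun_prop))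
  · refine disjoint_left.mpr fun y ⟨hy, hyN⟩ hyO => a.2.2.1 ?_
    have : y * (inv y * a) = a := by rw [← mul_assoc, hy, hinv.mul_inv_mul]
    exact this ▸ (hON (mk_mem_prod hyO hyN) : y * (inv y * a) ∈ W)

theorem IsPseudocompact.finite_of_injOn_mul_inv (hpc : IsPseudocompact S) {A : Set S}
    (hA : LocallyFiniteSet A) (h0 : (0 : S) ∉ A) (hinj : InjOn (fun y => y * inv y) A) :
    A.Finite := by
  refine not_infinite.mp fun hinf => ?_
  rcases hinf.exists_infinite_fiber_or_injOn (fun y => inv y * y) with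
    ⟨a, -, hfib⟩ | ⟨B, hBA, hB, hBinj⟩
  · refine hfib (hpc.finite_of_injOn_mul_inv_of_forall_nhds hinv hinvc hprim
      (hA.mono inter_subset_left) (fun h => h0 h.1) (hinj.mono inter_subset_left)
      (f := inv a * a) fun N hN => ?_)
    refine finite_empty.subset fun y ⟨⟨_, (hy : inv y * y = inv a * a)⟩, hyN⟩ => hyN ?_
    exact hy ▸ mem_of_mem_nhds hN
  · refine hB (hpc.finite_of_injOn_mul_inv_of_forall_nhds hinv hinvc hprim (hA.mono hBA)
      (fun h => h0 (hBA h)) (hinj.mono hBA) (f := 0) fun N hN => ?_)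
    refine Finite.of_finite_image ((hpc.finite_setOf_isIdempotentElem_notMem hinv hinvc hprim
      hN).subset (image_subset_iff.mpr fun y hy => ⟨hinv.isIdempotentElem_inv_mul y, hy.2⟩))
      (hBinj.mono fun y hy => hy.1)

theorem IsPseudocompact.finite_of_injOn_inv_mul (hpc : IsPseudocompact S) {A : Set S}
    (hA : LocallyFiniteSet A) (h0 : (0 : S) ∉ A) (hinj : InjOn (fun y => inv y * y) A) :
    A.Finite := by
  -- inversion exchanges `y y⁻¹` and `y⁻¹ y`
  have := hpc.finite_of_injOn_mul_inv hinv hinvc hprim (hA.preimage hinvc hinv.inv_injective)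
    (by rwa [mem_preimage, hinv.inv_zero])
    fun x hx y hy hxy => hinv.inv_injective (hinj hx hy (by simpa [hinv.inv_inv] using hxy))
  simpa [preimage_preimage, hinv.inv_inv] using this.preimage hinv.inv_injective.injOn

theorem IsPseudocompact.finite_of_injOn_hClass (hpc : IsPseudocompact S) {A : Set S}
    (hA : LocallyFiniteSet A) (h0 : (0 : S) ∉ A) (hinj : InjOn (hClass inv) A) : A.Finite := by
  refine not_infinite.mp fun hinf => ?_
  rcases hinf.exists_infinite_fiber_or_injOn (fun y => y * inv y) with
    ⟨a, -, hfib⟩ | ⟨B, hBA, hB, hBinj⟩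
  · exact hfib (hpc.finite_of_injOn_inv_mul hinv hinvc hprim (hA.mono inter_subset_left)
      (fun h => h0 h.1) fun x hx y hy hxy =>
        hinj hx.1 hy.1 (hClass_congr (hx.2.trans hy.2.symm) hxy))
  · exact hB (hpc.finite_of_injOn_mul_inv hinv hinvc hprim (hA.mono hBA) (fun h => h0 (hBA h))
      hBinj)

/-- `𝓗`-classes are homeomorphic to maximal subgroups, hence normal; Tietze then yields a
continuous function taking every natural value on the clopen set `hClass inv a`. -/
theorem IsPseudocompact.finite_of_subset_hClass (hpc : IsPseudocompact S)
    (hnorm : ∀ H : Set S, IsMaximalSubgroup S H → NormalSpace H) {A : Set S}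
    (hA : LocallyFiniteSet A) {a : S} (ha : a ≠ 0) (hAH : A ⊆ hClass inv a) : A.Finite := by
  have : NormalSpace (hClass inv (inv a * a)) :=
    hnorm _ (hinv.isMaximalSubgroup_hClass (hinv.isIdempotentElem_inv_mul a))
  have : NormalSpace (hClass inv a) := (hinv.hClassHomeomorph a).isClosedEmbedding.normalSpace
  set A' : Set (hClass inv a) := (↑) ⁻¹' A
  have hA' : LocallyFiniteSet A' := hA.preimage continuous_subtype_val Subtype.val_injective
  have := hA'.discreteTopology
  refine not_infinite.mp fun hinf => ?_
  have hinf' : A'.Infinite := fun h =>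
    hinf ((h.image Subtype.val).subset fun y hy => ⟨⟨y, hAH hy⟩, hy, rfl⟩)
  obtain ⟨g, hg⟩ := exists_continuousMap_natCast_mem_range hA'.isClosed hinf'
  exact infinite_univ ((hpc.finite_setOf_natCast_mem_range
    (isClopen_hClass hinv hinvc hprim ha) g).subset fun k _ => hg k)

theorem IsPseudocompact.finite_of_locallyFiniteSet (hpc : IsPseudocompact S)
    (hnorm : ∀ H : Set S, IsMaximalSubgroup S H → NormalSpace H) {A : Set S}
    (hA : LocallyFiniteSet A) : A.Finite := by
  suffices (A \ {0}).Finite from (this.union (finite_singleton 0)).subset (subset_sdiff_union A {0})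
  refine not_infinite.mp fun hinf => ?_
  rcases hinf.exists_infinite_fiber_or_injOn (hClass inv) with
    ⟨a, ha, hfib⟩ | ⟨B, hBA, hB, hBinj⟩
  · exact hfib (hpc.finite_of_subset_hClass hinv hinvc hprim hnorm (hA.mono fun y hy => hy.1.1)
      ha.2 fun y hy => (mem_singleton_iff.mp hy.2) ▸ mem_hClass_self inv y)
  · exact hB (hpc.finite_of_injOn_hClass hinv hinvc hprim (hA.mono fun y hy => (hBA hy).1)
      (fun h => (hBA h).2 rfl) hBinj)

end TopologicalInverseSemigroup

theorem countablyCompact_of_pseudocompact_primitive_normal_subgroups_general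
    {S : Type*} [SemigroupWithZero S] [TopologicalSpace S] [T2Space S]
    (continuous_mul : Continuous fun p : S × S => p.1 * p.2)
    (inv : S → S) (hinv : IsInverseSemigroup S inv) (hinvc : Continuous inv)
    (hprim : IsPrimitiveInverse S)
    (hpc : IsPseudocompact S)
    (hnorm : ∀ H : Set S, IsMaximalSubgroup S H → NormalSpace ↥H) :
    IsCountablyCompactSpace S :=
  have : ContinuousMul S := ⟨continuous_mul⟩
  isCountablyCompactSpace_of_forall_locallyFiniteSet fun _ hA =>
    hpc.finite_of_locallyFiniteSet hinv hinvc hprim hnorm hA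

/-- A primitive Hausdorff pseudocompact topological inverse
semigroup all of whose maximal subgroups are normal subspaces is countably
compact. -/
theorem countablyCompact_of_pseudocompact_primitive_normal_subgroups
    {S : Type*} [SemigroupWithZero S] [TopologicalSpace S] [T2Space S]
    (continuous_mul : Continuous fun p : S × S => p.1 * p.2)
    (inv : S → S) (hinv : IsInverseSemigroup S inv) (hinvc : Continuous inv)
    (hnt : Nontrivial S) (hprim : IsPrimitiveInverse S)
    (hpc : IsPseudocompact S)
    (hnorm : ∀ H : Set S, IsMaximalSubgroup S H → NormalSpace ↥H) :
    IsCountablyCompactSpace S :=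
  countablyCompact_of_pseudocompact_primitive_normal_subgroups_general continuous_mul inv hinv hinvc
    hprim hpc hnorm
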